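/- Let F = {n! : n ≥ 1} ⊆ ℝ with the metric induced from ℝ. Then every quasi-isometry φ : F → F is at finite sup-distance from the identity map; consequently the quasi-isometry group QI(F) is trivial. -/

import Mathlib

/-! A quasi-isometric embedding `φ` of the factorials changes the distance `n! - 1` from the
base point `0! = 1` by at most a bounded factor and an additive constant. A factorial `m! ≠ n!`
is either at most `(n-1)! = n!/n` or at least `(n+1)! = (n+1)·n!`, so for large `n` neither can
be at the distance from `φ(0!)` that `φ(n!)` must have: `φ` fixes `n!` for all large `n`. Off
the finite set of smaller factorials `φ` is then the identity, and a coarsely Lipschitz map that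
is the identity outside a bounded set is at bounded distance from the identity. -/

/-- `φ` is a `(l, c)`-quasi-isometric embedding. -/
def QIEmbedding {X Y : Type*} [MetricSpace X] [MetricSpace Y]
    (l c : ℝ) (φ : X → Y) : Prop :=
  ∀ x x' : X, (1 / l) * dist x x' - c ≤ dist (φ x) (φ x') ∧
    dist (φ x) (φ x') ≤ l * dist x x' + c

/-- `φ` is `K`-coarsely surjective. -/
def CoarselySurjective {X Y : Type*} [MetricSpace X] [MetricSpace Y]
    (K : ℝ) (φ : X → Y) : Prop :=
  ∀ y : Y, ∃ x : X, dist y (φ x) ≤ K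

/-- `φ` is a `(l, c)`-quasi-isometry: a `(l,c)`-quasi-isometric embedding
which is `c`-coarsely surjective (with `l ≥ 1`, `c ≥ 0`). -/
def IsQI {X Y : Type*} [MetricSpace X] [MetricSpace Y]
    (l c : ℝ) (φ : X → Y) : Prop :=
  1 ≤ l ∧ 0 ≤ c ∧ QIEmbedding l c φ ∧ CoarselySurjective c φ

/-- `φ` is a quasi-isometry (for some constants). -/
def IsQuasiIsometry {X Y : Type*} [MetricSpace X] [MetricSpace Y]
    (φ : X → Y) : Prop :=
  ∃ l c : ℝ, IsQI l c φ

/-- The set of factorials `{n! : n ≥ 1}` as a subset of `ℝ`, with the induced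
metric. -/
def Fac : Set ℝ := {x : ℝ | ∃ n : ℕ, 1 ≤ n ∧ x = Nat.factorial n}

open Filter Metric

open Nat in
theorem eventually_forall_lt_mul_abs_factorial_sub_lt {l : ℝ} (hl : 0 ≤ l) (B c : ℝ) :
    ∀ᶠ n : ℕ in atTop, ∀ m < n, l * (|(m ! : ℝ) - B| + c) < (n ! : ℝ) - 1 := by
  obtain ⟨N, hN⟩ := exists_nat_gt (l + |l * (|B| + c)| + 1)
  refine eventually_atTop.2 ⟨N + 1, fun n hn m hm => ?_⟩
  obtain ⟨k, rfl⟩ : ∃ k, n = k + 1 := ⟨n - 1, by omega⟩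
  have hmk : (m ! : ℝ) ≤ k ! := by exact_mod_cast factorial_le (by omega)
  have hk : (1 : ℝ) ≤ k ! := by exact_mod_cast factorial_pos k
  have hNk : (N : ℝ) ≤ k := by exact_mod_cast (by omega : N ≤ k)
  have habs : |(m ! : ℝ) - B| ≤ k ! + |B| := by
    have := abs_sub (m ! : ℝ) B
    rw [abs_of_nonneg (by positivity : (0 : ℝ) ≤ m !)] at this
    linarith
  calc l * (|(m ! : ℝ) - B| + c) ≤ l * k ! + l * (|B| + c) := by nlinarith
    _ < (k + 1) * (k ! : ℝ) - 1 := by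
        have hK := le_abs_self (l * (|B| + c))
        nlinarith [mul_nonneg (by linarith [abs_nonneg (l * (|B| + c))] : (0 : ℝ) ≤ k + 1 - l)
          (sub_nonneg.2 hk)]
    _ = ((k + 1)! : ℝ) - 1 := by push_cast [factorial_succ]; ring

open Nat in
theorem eventually_forall_gt_mul_factorial_sub_lt_abs (l B c : ℝ) :
    ∀ᶠ n : ℕ in atTop, ∀ m, n < m → l * ((n ! : ℝ) - 1) + c < |(m ! : ℝ) - B| := by
  obtain ⟨N, hN⟩ := exists_nat_gt (max l (B + c))
  refine eventually_atTop.2 ⟨N, fun n hn m hm => ?_⟩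
  have hnm : (((n + 1)! : ℕ) : ℝ) ≤ m ! := by exact_mod_cast factorial_le hm
  have hn1 : (1 : ℝ) ≤ n ! := by exact_mod_cast factorial_pos n
  have hNn : (N : ℝ) ≤ n := by exact_mod_cast hn
  have hmax := max_lt_iff.1 hN
  calc l * ((n ! : ℝ) - 1) + c < (n + 1) * (n ! : ℝ) - B := by nlinarith
    _ = ((n + 1)! : ℝ) - B := by push_cast [factorial_succ]; ring
    _ ≤ |(m ! : ℝ) - B| := by linarith [le_abs_self ((m ! : ℝ) - B)]

theorem exists_dist_apply_le_of_eqOn_compl_closedBall {X : Type*} [PseudoMetricSpace X]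
    {f : X → X} {l c : ℝ} (hl : 0 ≤ l) (hf : ∀ x y, dist (f x) (f y) ≤ l * dist x y + c)
    {p : X} {R : ℝ} (hfix : Set.EqOn f id (closedBall p R)ᶜ) :
    ∃ M, ∀ x, dist (f x) x ≤ M := by
  refine ⟨max 0 ((l + 1) * R + c + dist (f p) p), fun x => ?_⟩
  by_cases hx : x ∈ closedBall p R
  · have hxp : dist x p ≤ R := hx
    calc dist (f x) x ≤ dist (f x) (f p) + dist (f p) p + dist p x := dist_triangle4 _ _ _ _
      _ ≤ (l * dist x p + c) + dist (f p) p + dist x p := by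
          rw [dist_comm p x]; linarith [hf x p]
      _ ≤ (l + 1) * R + c + dist (f p) p := by nlinarith
      _ ≤ _ := le_max_right _ _
  · rw [hfix hx, id, dist_self]
    exact le_max_left _ _

theorem factorial_mem_fac (n : ℕ) : (n.factorial : ℝ) ∈ Fac :=
  ⟨max n 1, le_max_right _ _, by
    rcases Nat.eq_zero_or_pos n with rfl | hn
    · rfl
    · rw [max_eq_left hn]⟩

namespace Fac

-- Indexed from `0` so that it is onto `Fac`; `fact 0 = fact 1`.
def fact (n : ℕ) : Fac := ⟨n.factorial, factorial_mem_fac n⟩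

theorem exists_eq_fact (x : Fac) : ∃ n, x = fact n := by
  obtain ⟨n, -, hn⟩ := x.2
  exact ⟨n, Subtype.ext hn⟩

theorem dist_fact (m n : ℕ) :
    dist (fact m) (fact n) = |(m.factorial : ℝ) - n.factorial| := by
  rw [Subtype.dist_eq, Real.dist_eq]
  rfl

theorem dist_fact_zero (n : ℕ) : dist (fact n) (fact 0) = (n.factorial : ℝ) - 1 := by
  rw [dist_fact, Nat.factorial_zero, Nat.cast_one, abs_of_nonneg]
  exact sub_nonneg.2 (by exact_mod_cast n.factorial_pos)

theorem eventually_apply_fact_eq {φ : Fac → Fac} {l c : ℝ} (hl : 0 < l)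
    (hφ : QIEmbedding l c φ) : ∀ᶠ n in atTop, φ (fact n) = fact n := by
  set B : ℝ := (φ (fact 0) : ℝ)
  filter_upwards [eventually_forall_lt_mul_abs_factorial_sub_lt hl.le B c,
    eventually_forall_gt_mul_factorial_sub_lt_abs l B c] with n hlt hgt
  obtain ⟨m, hm⟩ := exists_eq_fact (φ (fact n))
  have hdist : dist (φ (fact n)) (φ (fact 0)) = |(m.factorial : ℝ) - B| := by
    rw [hm, Subtype.dist_eq, Real.dist_eq]
    rfl
  obtain ⟨hlower, hupper⟩ := hφ (fact n) (fact 0)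
  rw [dist_fact_zero, hdist] at hlower hupper
  rw [hm]
  congr 1
  rcases lt_trichotomy m n with hmn | rfl | hnm
  · rw [one_div, inv_mul_eq_div, sub_le_iff_le_add, div_le_iff₀' hl] at hlower
    exact absurd hlower (hlt m hmn).not_ge
  · rfl
  · exact absurd hupper (hgt m hnm).not_ge

theorem exists_dist_apply_le {φ : Fac → Fac} (hφ : IsQuasiIsometry φ) :
    ∃ M, ∀ x, dist (φ x) x ≤ M := by
  obtain ⟨l, c, hl, -, hemb, -⟩ := hφ
  obtain ⟨N, hN⟩ := eventually_atTop.1 (eventually_apply_fact_eq (by linarith) hemb)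
  refine exists_dist_apply_le_of_eqOn_compl_closedBall (by linarith) (fun x y => (hemb x y).2)
    (p := fact 0) (R := N.factorial) fun x hx => ?_
  obtain ⟨n, rfl⟩ := exists_eq_fact x
  rw [Set.mem_compl_iff, mem_closedBall, not_le, dist_fact_zero] at hx
  refine hN n (le_of_not_gt fun hnN => ?_)
  have : (n.factorial : ℝ) ≤ N.factorial := by exact_mod_cast Nat.factorial_le hnN.le
  linarith

end Fac

/-- Every quasi-isometry of the set of factorials is at finite sup-distance
from the identity; consequently any two quasi-isometries are at finite
sup-distance, i.e. `QI(F)` is trivial. -/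
theorem stmt_14 :
    (∀ φ : Fac → Fac, IsQuasiIsometry φ →
      ∃ M : ℝ, ∀ x : Fac, dist (φ x) x ≤ M) ∧
    (∀ φ ψ : Fac → Fac, IsQuasiIsometry φ → IsQuasiIsometry ψ →
      ∃ M : ℝ, ∀ x : Fac, dist (φ x) (ψ x) ≤ M) := by
  refine ⟨fun φ hφ => Fac.exists_dist_apply_le hφ, fun φ ψ hφ hψ => ?_⟩
  obtain ⟨M, hM⟩ := Fac.exists_dist_apply_le hφ
  obtain ⟨M', hM'⟩ := Fac.exists_dist_apply_le hψ
  refine ⟨M + M', fun x => ?_⟩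
  calc dist (φ x) (ψ x) ≤ dist (φ x) x + dist (ψ x) x := dist_triangle_right _ _ _
    _ ≤ M + M' := add_le_add (hM x) (hM' x)
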